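/- Let A be a real symmetric positive definite n×n matrix, C a real symmetric positive definite m×m matrix, and B a real n×m matrix, and let 𝒜 := [[A, B], [Bᵀ, −C]] be the associated (n+m)×(n+m) symmetric saddle point matrix. Define the negative Schur complements S := C + Bᵀ A⁻¹ B and R := A + B C⁻¹ Bᵀ, and the block-diagonal preconditioners P₀ := diag(A, S) and P₁ := diag(R, C). Then for j ∈ {0,1} and all u ∈ ℝ^{n+m}: ((√5 − 1)/2) ‖u‖_{P_j} ≤ ‖𝒜u‖_{P_j⁻¹} ≤ ((√5 + 1)/2) ‖u‖_{P_j}, where ‖v‖_M := √(vᵀMv) for a symmetric positive definite matrix M. -/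

import Mathlib

/-!
With `P = diag(A, S)` and `E = diag(B S⁻¹ Bᵀ, Bᵀ A⁻¹ B)`, a block computation using
`S - Bᵀ A⁻¹ B = C` gives `𝒜ᵀ P⁻¹ 𝒜 = P + E P⁻¹ 𝒜`. For `w = P⁻¹ 𝒜 u` this reads
`‖𝒜u‖²_{P⁻¹} - ‖u‖²_P = uᵀ E w`, and `‖w‖_P = ‖𝒜u‖_{P⁻¹}`. Moreover `0 ≤ E ≤ P`: the lower
block of `P - E` is `C`, and the upper one `A - B S⁻¹ Bᵀ` is semidefinite because the two Schur
complements of `[[A, B], [Bᵀ, S]]` are semidefinite together. Cauchy–Schwarz for `E` then gives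
`|r² - x²| ≤ r x` for `r = ‖𝒜u‖_{P⁻¹}`, `x = ‖u‖_P`, which confines `r / x` to
`[(√5 - 1)/2, (√5 + 1)/2]`. The preconditioner `diag(R, C)` is the same situation for `-𝒜`
with the roles of the two blocks exchanged.
-/

open Matrix

lemma golden_bounds_of_abs_sq_sub_sq_le {x r : ℝ} (hx : 0 ≤ x) (hr : 0 ≤ r)
    (h : |r ^ 2 - x ^ 2| ≤ r * x) :
    (Real.sqrt 5 - 1) / 2 * x ≤ r ∧ r ≤ (Real.sqrt 5 + 1) / 2 * x := by
  have h5 : Real.sqrt 5 ^ 2 = 5 := Real.sq_sqrt (by norm_num)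
  have h5' : 1 < Real.sqrt 5 := by nlinarith [Real.sqrt_nonneg 5]
  obtain ⟨h₁, h₂⟩ := abs_le.mp h
  -- `t² - t - 1 = (t - φ)(t + φ - 1)` with `φ = (√5 + 1) / 2`
  constructor
  · by_contra! hlt
    nlinarith [mul_pos (by linarith : 0 < (Real.sqrt 5 - 1) / 2 * x - r)
      (by nlinarith : 0 < (Real.sqrt 5 + 1) / 2 * x + r)]
  · by_contra! hlt
    nlinarith [mul_pos (by linarith : 0 < r - (Real.sqrt 5 + 1) / 2 * x)
      (by nlinarith : 0 < r + (Real.sqrt 5 - 1) / 2 * x)]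

namespace Matrix

section

variable {ι : Type*} [Fintype ι] [DecidableEq ι]

lemma PosDef.isUnit_det {X : Matrix ι ι ℝ} (hX : X.PosDef) : IsUnit X.det :=
  (isUnit_iff_isUnit_det X).mp hX.isUnit

lemma PosSemidef.dotProduct_mulVec_sq_le {E : Matrix ι ι ℝ} (hE : E.PosSemidef) (x y : ι → ℝ) :
    (x ⬝ᵥ (E *ᵥ y)) ^ 2 ≤ (x ⬝ᵥ (E *ᵥ x)) * (y ⬝ᵥ (E *ᵥ y)) := by
  have hsymm : y ⬝ᵥ (E *ᵥ x) = x ⬝ᵥ (E *ᵥ y) := by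
    rw [dotProduct_mulVec, ← mulVec_transpose, (isHermitian_iff_isSymm.mp hE.isHermitian).eq,
      dotProduct_comm]
  simpa [toBilin'_apply', sq, hsymm] using (toBilin' E).apply_mul_apply_le_of_forall_zero_le
    (fun z => by simpa [toBilin'_apply'] using hE.dotProduct_mulVec_nonneg z) x y

lemma abs_dotProduct_mulVec_le_of_posSemidef_sub {E P : Matrix ι ι ℝ} (hE : E.PosSemidef)
    (hPE : (P - E).PosSemidef) (x y : ι → ℝ) :
    |x ⬝ᵥ (E *ᵥ y)| ≤ Real.sqrt (x ⬝ᵥ (P *ᵥ x)) * Real.sqrt (y ⬝ᵥ (P *ᵥ y)) := by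
  have hle : ∀ z, z ⬝ᵥ (E *ᵥ z) ≤ z ⬝ᵥ (P *ᵥ z) := fun z => by
    simpa [sub_mulVec] using hPE.dotProduct_mulVec_nonneg z
  rw [← Real.sqrt_mul (le_trans (by simpa using hE.dotProduct_mulVec_nonneg x) (hle x))]
  refine Real.abs_le_sqrt ((hE.dotProduct_mulVec_sq_le x y).trans ?_)
  exact mul_le_mul (hle x) (hle y) (by simpa using hE.dotProduct_mulVec_nonneg y)
    (le_trans (by simpa using hE.dotProduct_mulVec_nonneg x) (hle x))

theorem golden_bounds_of_transpose_mul_inv_mul_eq {M P E : Matrix ι ι ℝ} (hP : IsUnit P.det)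
    (hE : E.PosSemidef) (hPE : (P - E).PosSemidef) (h : Mᵀ * P⁻¹ * M = P + E * P⁻¹ * M)
    (u : ι → ℝ) :
    (Real.sqrt 5 - 1) / 2 * Real.sqrt (u ⬝ᵥ (P *ᵥ u))
        ≤ Real.sqrt ((M *ᵥ u) ⬝ᵥ (P⁻¹ *ᵥ (M *ᵥ u))) ∧
      Real.sqrt ((M *ᵥ u) ⬝ᵥ (P⁻¹ *ᵥ (M *ᵥ u)))
        ≤ (Real.sqrt 5 + 1) / 2 * Real.sqrt (u ⬝ᵥ (P *ᵥ u)) := by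
  have hPpsd : P.PosSemidef := by simpa using hPE.add hE
  set w := P⁻¹ *ᵥ (M *ᵥ u)
  have hw : w ⬝ᵥ (P *ᵥ w) = (M *ᵥ u) ⬝ᵥ w := by
    rw [mulVec_mulVec, mul_nonsing_inv P hP, one_mulVec, dotProduct_comm]
  have hdiff : (M *ᵥ u) ⬝ᵥ w - u ⬝ᵥ (P *ᵥ u) = u ⬝ᵥ (E *ᵥ w) := by
    have := congrArg (fun N => u ⬝ᵥ (N *ᵥ u)) h
    rw [sub_eq_iff_eq_add']
    simpa [add_mulVec, ← mulVec_mulVec, dotProduct_mulVec u Mᵀ, vecMul_transpose, w] using this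
  have key := abs_dotProduct_mulVec_le_of_posSemidef_sub hE hPE u w
  rw [← hdiff, hw] at key
  apply golden_bounds_of_abs_sq_sub_sq_le (Real.sqrt_nonneg _) (Real.sqrt_nonneg _)
  have hu₀ : 0 ≤ u ⬝ᵥ (P *ᵥ u) := by simpa using hPpsd.dotProduct_mulVec_nonneg u
  have hw₀ : 0 ≤ (M *ᵥ u) ⬝ᵥ w := hw ▸ by simpa using hPpsd.dotProduct_mulVec_nonneg w
  rwa [Real.sq_sqrt hu₀, Real.sq_sqrt hw₀, mul_comm]

end

variable {ι κ : Type*} [Fintype ι] [Fintype κ]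

lemma PosSemidef.fromBlocks_zero {X : Matrix ι ι ℝ} {Y : Matrix κ κ ℝ} (hX : X.PosSemidef)
    (hY : Y.PosSemidef) : (fromBlocks X 0 0 Y).PosSemidef := by
  refine .of_dotProduct_mulVec_nonneg (hX.isHermitian.fromBlocks (by simp) hY.isHermitian)
    fun x => ?_
  obtain ⟨a, b, rfl⟩ : ∃ a b, x = Sum.elim a b := ⟨_, _, (Sum.elim_comp_inl_inr x).symm⟩
  simpa [fromBlocks_mulVec, sumElim_dotProduct_sumElim] using
    add_nonneg (hX.dotProduct_mulVec_nonneg a) (hY.dotProduct_mulVec_nonneg b)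

variable [DecidableEq ι] [DecidableEq κ]

lemma posSemidef_sub_mul_inv_mul_transpose_iff {X : Matrix ι ι ℝ} {Y : Matrix κ κ ℝ}
    (B : Matrix ι κ ℝ) (hX : X.PosDef) (hY : Y.PosDef) :
    (X - B * Y⁻¹ * Bᵀ).PosSemidef ↔ (Y - Bᵀ * X⁻¹ * B).PosSemidef := by
  let := hX.isUnit.invertible
  let := hY.isUnit.invertible
  have h₁₁ := PosDef.fromBlocks₁₁ B Y hX
  have h₂₂ := PosDef.fromBlocks₂₂ X B hY
  rw [conjTranspose_eq_transpose_of_trivial] at h₁₁ h₂₂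
  exact h₂₂.symm.trans h₁₁

lemma posSemidef_fromBlocks_mul_inv_mul_transpose {X : Matrix ι ι ℝ} {Y : Matrix κ κ ℝ}
    (B : Matrix ι κ ℝ) (hX : X.PosDef) (hY : Y.PosDef) :
    (fromBlocks (B * Y⁻¹ * Bᵀ) 0 0 (Bᵀ * X⁻¹ * B)).PosSemidef :=
  .fromBlocks_zero (by simpa using hY.inv.posSemidef.mul_mul_conjTranspose_same B)
    (by simpa using hX.inv.posSemidef.conjTranspose_mul_mul_same B)

lemma posSemidef_fromBlocks_sub_fromBlocks_mul_inv_mul_transpose {X : Matrix ι ι ℝ}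
    {Y : Matrix κ κ ℝ} {B : Matrix ι κ ℝ} (hX : X.PosDef) (hY : Y.PosDef)
    (h : (Y - Bᵀ * X⁻¹ * B).PosSemidef) :
    (fromBlocks X 0 0 Y - fromBlocks (B * Y⁻¹ * Bᵀ) 0 0 (Bᵀ * X⁻¹ * B)).PosSemidef := by
  rw [sub_eq_add_neg, fromBlocks_neg, fromBlocks_add]
  simp only [neg_zero, add_zero, ← sub_eq_add_neg]
  exact .fromBlocks_zero ((posSemidef_sub_mul_inv_mul_transpose_iff B hX hY).mpr h) h

lemma inv_fromBlocks_zero_zero {X : Matrix ι ι ℝ} {Y : Matrix κ κ ℝ} (hX : IsUnit X)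
    (hY : IsUnit Y) :
    (fromBlocks X 0 0 Y)⁻¹ = fromBlocks X⁻¹ 0 0 Y⁻¹ := by
  simpa using inv_fromBlocks_zero₂₁_of_isUnit_iff X 0 Y (iff_of_true hX hY)

lemma fromBlocks_transpose_mul_inv_mul_eq {A : Matrix ι ι ℝ} {B : Matrix ι κ ℝ} {C S : Matrix κ κ ℝ}
    (hAs : Aᵀ = A) (hCs : Cᵀ = C) (hA : IsUnit A.det) (hS : IsUnit S.det)
    (hSC : S = C + Bᵀ * A⁻¹ * B) :
    (fromBlocks A B Bᵀ (-C))ᵀ * (fromBlocks A 0 0 S)⁻¹ * fromBlocks A B Bᵀ (-C)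
      = fromBlocks A 0 0 S + fromBlocks (B * S⁻¹ * Bᵀ) 0 0 (Bᵀ * A⁻¹ * B) * (fromBlocks A 0 0 S)⁻¹
        * fromBlocks A B Bᵀ (-C) := by
  have hK : Bᵀ * (A⁻¹ * B) = S - C := by rw [hSC, Matrix.mul_assoc]; abel
  rw [inv_fromBlocks_zero_zero ((isUnit_iff_isUnit_det A).mpr hA)
    ((isUnit_iff_isUnit_det S).mpr hS), fromBlocks_transpose]
  simp only [fromBlocks_multiply, fromBlocks_add, transpose_transpose, transpose_neg, hAs, hCs,
    Matrix.mul_zero, Matrix.zero_mul, add_zero, zero_add]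
  congr 1 <;> simp only [Matrix.mul_assoc, hK, mul_nonsing_inv _ hA, nonsing_inv_mul _ hA,
    nonsing_inv_mul _ hS, mul_nonsing_inv_cancel_left _ _ hS, Matrix.one_mul, Matrix.mul_one,
    Matrix.mul_sub, Matrix.sub_mul, Matrix.mul_neg, Matrix.neg_mul] <;> abel

lemma fromBlocks_neg_transpose_mul_inv_mul_eq {A R : Matrix ι ι ℝ} {B : Matrix ι κ ℝ}
    {C : Matrix κ κ ℝ}
    (hAs : Aᵀ = A) (hCs : Cᵀ = C) (hR : IsUnit R.det) (hC : IsUnit C.det)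
    (hRA : R = A + B * C⁻¹ * Bᵀ) :
    (-fromBlocks A B Bᵀ (-C))ᵀ * (fromBlocks R 0 0 C)⁻¹ * -fromBlocks A B Bᵀ (-C)
      = fromBlocks R 0 0 C + fromBlocks (B * C⁻¹ * Bᵀ) 0 0 (Bᵀ * R⁻¹ * B) * (fromBlocks R 0 0 C)⁻¹
        * -fromBlocks A B Bᵀ (-C) := by
  have hK : B * (C⁻¹ * Bᵀ) = R - A := by rw [hRA, Matrix.mul_assoc]; abel
  rw [inv_fromBlocks_zero_zero ((isUnit_iff_isUnit_det R).mpr hR)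
    ((isUnit_iff_isUnit_det C).mpr hC), transpose_neg, fromBlocks_transpose]
  simp only [fromBlocks_neg, fromBlocks_multiply, fromBlocks_add, transpose_transpose,
    transpose_neg, hAs, hCs, Matrix.mul_zero, Matrix.zero_mul, add_zero, zero_add, neg_neg]
  congr 1 <;> simp only [Matrix.mul_assoc, hK, mul_nonsing_inv _ hR, nonsing_inv_mul _ hR,
    nonsing_inv_mul _ hC, mul_nonsing_inv_cancel_left _ _ hC, Matrix.one_mul, Matrix.mul_one,
    Matrix.mul_sub, Matrix.sub_mul, Matrix.mul_neg, Matrix.neg_mul] <;> abel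

theorem golden_bounds_fromBlocks {M : Matrix (ι ⊕ κ) (ι ⊕ κ) ℝ} {X : Matrix ι ι ℝ}
    {Y : Matrix κ κ ℝ} {B : Matrix ι κ ℝ} (hX : X.PosDef) (hY : Y.PosDef)
    (hXY : (Y - Bᵀ * X⁻¹ * B).PosSemidef)
    (h : Mᵀ * (fromBlocks X 0 0 Y)⁻¹ * M = fromBlocks X 0 0 Y
      + fromBlocks (B * Y⁻¹ * Bᵀ) 0 0 (Bᵀ * X⁻¹ * B) * (fromBlocks X 0 0 Y)⁻¹ * M)
    (u : ι ⊕ κ → ℝ) :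
    (Real.sqrt 5 - 1) / 2 * Real.sqrt (u ⬝ᵥ (fromBlocks X 0 0 Y *ᵥ u))
        ≤ Real.sqrt ((M *ᵥ u) ⬝ᵥ ((fromBlocks X 0 0 Y)⁻¹ *ᵥ (M *ᵥ u))) ∧
      Real.sqrt ((M *ᵥ u) ⬝ᵥ ((fromBlocks X 0 0 Y)⁻¹ *ᵥ (M *ᵥ u)))
        ≤ (Real.sqrt 5 + 1) / 2 * Real.sqrt (u ⬝ᵥ (fromBlocks X 0 0 Y *ᵥ u)) := by
  have hdet : IsUnit (fromBlocks X 0 0 Y).det := by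
    rw [det_fromBlocks_zero₂₁]
    exact hX.isUnit_det.mul hY.isUnit_det
  exact golden_bounds_of_transpose_mul_inv_mul_eq hdet
    (posSemidef_fromBlocks_mul_inv_mul_transpose B hX hY)
    (posSemidef_fromBlocks_sub_fromBlocks_mul_inv_mul_transpose hX hY hXY) h u

end Matrix

/-- Spectral inequalities for the block-diagonal preconditioners `P₀ = diag(A, S)` and
`P₁ = diag(R, C)` of the symmetric saddle point matrix `𝒜 = [[A, B],[Bᵀ, −C]]`, where
`S = C + Bᵀ A⁻¹ B` and `R = A + B C⁻¹ Bᵀ`: for `j ∈ {0,1}` and all `u`,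
`((√5 − 1)/2) ‖u‖_{P_j} ≤ ‖𝒜u‖_{P_j⁻¹} ≤ ((√5 + 1)/2) ‖u‖_{P_j}`,
with `‖v‖_M = √(vᵀMv)`. -/
theorem stmt_15 (n m : ℕ)
    (A : Matrix (Fin n) (Fin n) ℝ) (C : Matrix (Fin m) (Fin m) ℝ)
    (B : Matrix (Fin n) (Fin m) ℝ) (hA : A.PosDef) (hC : C.PosDef)
    (𝒜 : Matrix (Fin n ⊕ Fin m) (Fin n ⊕ Fin m) ℝ)
    (h𝒜 : 𝒜 = Matrix.fromBlocks A B Bᵀ (-C))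
    (S : Matrix (Fin m) (Fin m) ℝ) (hS : S = C + Bᵀ * A⁻¹ * B)
    (R : Matrix (Fin n) (Fin n) ℝ) (hR : R = A + B * C⁻¹ * Bᵀ)
    (P₀ P₁ : Matrix (Fin n ⊕ Fin m) (Fin n ⊕ Fin m) ℝ)
    (hP₀ : P₀ = Matrix.fromBlocks A 0 0 S) (hP₁ : P₁ = Matrix.fromBlocks R 0 0 C) :
    ∀ u : Fin n ⊕ Fin m → ℝ,
      ((Real.sqrt 5 - 1) / 2 * Real.sqrt (u ⬝ᵥ (P₀ *ᵥ u))
          ≤ Real.sqrt ((𝒜 *ᵥ u) ⬝ᵥ (P₀⁻¹ *ᵥ (𝒜 *ᵥ u))) ∧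
        Real.sqrt ((𝒜 *ᵥ u) ⬝ᵥ (P₀⁻¹ *ᵥ (𝒜 *ᵥ u)))
          ≤ (Real.sqrt 5 + 1) / 2 * Real.sqrt (u ⬝ᵥ (P₀ *ᵥ u))) ∧
      ((Real.sqrt 5 - 1) / 2 * Real.sqrt (u ⬝ᵥ (P₁ *ᵥ u))
          ≤ Real.sqrt ((𝒜 *ᵥ u) ⬝ᵥ (P₁⁻¹ *ᵥ (𝒜 *ᵥ u))) ∧
        Real.sqrt ((𝒜 *ᵥ u) ⬝ᵥ (P₁⁻¹ *ᵥ (𝒜 *ᵥ u)))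
          ≤ (Real.sqrt 5 + 1) / 2 * Real.sqrt (u ⬝ᵥ (P₁ *ᵥ u))) := by
  intro u
  subst h𝒜 hP₀ hP₁
  have hAs : Aᵀ = A := (isHermitian_iff_isSymm.mp hA.isHermitian).eq
  have hCs : Cᵀ = C := (isHermitian_iff_isSymm.mp hC.isHermitian).eq
  have hSpd : S.PosDef :=
    hS ▸ hC.add_posSemidef (by simpa using hA.inv.posSemidef.conjTranspose_mul_mul_same B)
  have hRpd : R.PosDef :=
    hR ▸ hA.add_posSemidef (by simpa using hC.inv.posSemidef.mul_mul_conjTranspose_same B)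
  refine ⟨golden_bounds_fromBlocks hA hSpd (by simpa [hS] using hC.posSemidef)
    (fromBlocks_transpose_mul_inv_mul_eq hAs hCs hA.isUnit_det hSpd.isUnit_det hS) u, ?_⟩
  have hCR : (C - Bᵀ * R⁻¹ * B).PosSemidef :=
    (posSemidef_sub_mul_inv_mul_transpose_iff B hRpd hC).mp (by simpa [hR] using hA.posSemidef)
  simpa [neg_mulVec, mulVec_neg] using golden_bounds_fromBlocks hRpd hC hCR
    (fromBlocks_neg_transpose_mul_inv_mul_eq hAs hCs hRpd.isUnit_det hC.isUnit_det hR) u
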